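/- arXiv:2007.07581 — 2 statements merged into one kernel-verified Lean document; each statement's English description precedes it below -/
import Mathlib

section
/- Let λ₀, λ₁ > 0 with λ₁ > λ₀, and let ψ: ℝ → [0,1] be smooth with support in {|x| ≤ 1}. For Q a real symmetric positive semidefinite n×n matrix, 0 ≤ q₀ ≤ 1 and s₀ = λ₁(1−q₀)/λ₀ + λ₁ − 1 − q₀·0 (i.e., defined by λ₁((1−q₀)/λ₀+1) = 1+s₀), the function g(ξ) = (Qξ · QBᵀξ)/⟨ξ⟩^{2−λ₁} · ψ(|Qξ|²/⟨ξ⟩^{2λ₁/λ₀}) satisfies: there exists C > 0 such that |g(ξ)| ≤ C ⟨Qξ⟩^{q₀} ⟨ξ⟩^{s₀} for all ξ ∈ ℝⁿ. -/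
set_option maxHeartbeats 1000000


/-- **Bound on the multiplier `g₁`.** For `λ₁ > λ₀ > 0`, `ψ` smooth with values in `[0,1]`
supported in `{|x| ≤ 1}`, `Q` symmetric positive semidefinite, `0 ≤ q₀ ≤ 1` and `s₀`
defined by `λ₁((1-q₀)/λ₀ + 1) = 1 + s₀`, the symbol
`g(ξ) = (Qξ·QBᵀξ)/⟨ξ⟩^{2-λ₁} ψ(|Qξ|²/⟨ξ⟩^{2λ₁/λ₀})` satisfies
`|g(ξ)| ≤ C ⟨Qξ⟩^{q₀} ⟨ξ⟩^{s₀}`. -/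
theorem multiplier_bound (n : ℕ) (B Q : Matrix (Fin n) (Fin n) ℝ)
    (hQsymm : Q.IsSymm) (hQpsd : Q.PosSemidef)
    (lam0 lam1 q0 s0 : ℝ) (hlam0 : 0 < lam0) (hlam1 : 0 < lam1) (hlt : lam0 < lam1)
    (hq0 : 0 ≤ q0) (hq1 : q0 ≤ 1)
    (hs0 : lam1 * ((1 - q0) / lam0 + 1) = 1 + s0)
    (ψ : ℝ → ℝ) (hψ : ContDiff ℝ (⊤ : ℕ∞) ψ) (hψ01 : ∀ x, ψ x ∈ Set.Icc (0 : ℝ) 1)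
    (hψsupp : Function.support ψ ⊆ {x : ℝ | |x| ≤ 1}) :
    ∃ C > 0, ∀ ξ : EuclideanSpace ℝ (Fin n),
      |(inner ℝ (Matrix.toEuclideanLin Q ξ)
          (Matrix.toEuclideanLin Q (Matrix.toEuclideanLin B.transpose ξ)) : ℝ) /
          Real.sqrt (1 + ‖ξ‖ ^ 2) ^ (2 - lam1) *
          ψ (‖Matrix.toEuclideanLin Q ξ‖ ^ 2 /
            Real.sqrt (1 + ‖ξ‖ ^ 2) ^ (2 * lam1 / lam0))| ≤
        C * Real.sqrt (1 + ‖Matrix.toEuclideanLin Q ξ‖ ^ 2) ^ q0 *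
          Real.sqrt (1 + ‖ξ‖ ^ 2) ^ s0 := by
  classical
  set L1 := LinearMap.toContinuousLinearMap (Matrix.toEuclideanLin Q) with hL1def
  set L2 := LinearMap.toContinuousLinearMap (Matrix.toEuclideanLin B.transpose) with hL2def
  refine ⟨‖L1‖ * ‖L2‖ + 1, by positivity, fun ξ => ?_⟩
  set u := Matrix.toEuclideanLin Q ξ with hu
  set v := Matrix.toEuclideanLin Q (Matrix.toEuclideanLin B.transpose ξ) with hv
  set a := Real.sqrt (1 + ‖ξ‖ ^ 2) with hadef
  set b := Real.sqrt (1 + ‖u‖ ^ 2) with hbdef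
  have ha1 : 1 ≤ a := by
    have := Real.sqrt_le_sqrt (show (1:ℝ) ≤ 1 + ‖ξ‖ ^ 2 by nlinarith [sq_nonneg ‖ξ‖])
    simpa [hadef] using this
  have ha0 : 0 < a := lt_of_lt_of_le one_pos ha1
  have hb1 : 1 ≤ b := by
    have := Real.sqrt_le_sqrt (show (1:ℝ) ≤ 1 + ‖u‖ ^ 2 by nlinarith [sq_nonneg ‖u‖])
    simpa [hbdef] using this
  have hb0 : 0 < b := lt_of_lt_of_le one_pos hb1
  have hRHS : 0 ≤ (‖L1‖ * ‖L2‖ + 1) * b ^ q0 * a ^ s0 := by positivity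
  have haSq : a ^ 2 = 1 + ‖ξ‖ ^ 2 := Real.sq_sqrt (by positivity)
  have hbSq : b ^ 2 = 1 + ‖u‖ ^ 2 := Real.sq_sqrt (by positivity)
  have hξa : ‖ξ‖ ≤ a := by nlinarith [norm_nonneg ξ, ha0]
  have hub : ‖u‖ ≤ b := by nlinarith [norm_nonneg u, hb0]
  by_cases hu0 : u = 0
  · rw [hu0]
    simp only [inner_zero_left, zero_div, zero_mul, abs_zero]
    exact hRHS
  have hupos : 0 < ‖u‖ := norm_pos_iff.mpr hu0
  by_cases hψ0 : ψ (‖u‖ ^ 2 / a ^ (2 * lam1 / lam0)) = 0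
  · rw [hψ0, mul_zero, abs_zero]
    exact hRHS
  -- support condition
  have harg : ‖u‖ ^ 2 / a ^ (2 * lam1 / lam0) ≤ 1 := by
    have hm := hψsupp (Function.mem_support.mpr hψ0)
    have habs := hm
    simp only [Set.mem_setOf_eq] at habs
    have hnn : 0 ≤ ‖u‖ ^ 2 / a ^ (2 * lam1 / lam0) :=
      div_nonneg (by positivity) (Real.rpow_pos_of_pos ha0 _).le
    calc ‖u‖ ^ 2 / a ^ (2 * lam1 / lam0)
        ≤ |‖u‖ ^ 2 / a ^ (2 * lam1 / lam0)| := le_abs_self _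
      _ ≤ 1 := habs
  have hkey : ‖u‖ ≤ a ^ (lam1 / lam0) := by
    have hpos : 0 < a ^ (2 * lam1 / lam0) := Real.rpow_pos_of_pos ha0 _
    have h2 : ‖u‖ ^ 2 ≤ a ^ (2 * lam1 / lam0) := (div_le_one hpos).mp harg
    have heq : a ^ (2 * lam1 / lam0) = (a ^ (lam1 / lam0)) ^ 2 := by
      rw [← Real.rpow_natCast (a ^ (lam1 / lam0)) 2, ← Real.rpow_mul ha0.le]
      norm_num
      ring_nf
    have hcpos : 0 < a ^ (lam1 / lam0) := Real.rpow_pos_of_pos ha0 _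
    nlinarith [norm_nonneg u, hcpos, h2, heq]
  -- bound on v
  have hvle : ‖v‖ ≤ ‖L1‖ * ‖L2‖ * a := by
    have h1 : ‖v‖ = ‖L1 (L2 ξ)‖ := by
      simp [hv, hL1def, hL2def]
    rw [h1]
    calc ‖L1 (L2 ξ)‖ ≤ ‖L1‖ * ‖L2 ξ‖ := L1.le_opNorm _
      _ ≤ ‖L1‖ * (‖L2‖ * ‖ξ‖) := by gcongr; exact L2.le_opNorm _
      _ ≤ ‖L1‖ * (‖L2‖ * a) := by gcongr
      _ = ‖L1‖ * ‖L2‖ * a := by ring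
  -- ψ bound
  have hψle : |ψ (‖u‖ ^ 2 / a ^ (2 * lam1 / lam0))| ≤ 1 := by
    obtain ⟨h1, h2⟩ := hψ01 (‖u‖ ^ 2 / a ^ (2 * lam1 / lam0))
    rw [abs_le]; constructor <;> linarith
  -- exponent identity
  have hlam0ne : lam0 ≠ 0 := hlam0.ne'
  have hexp : lam1 / lam0 * (1 - q0) + 1 + (lam1 - 2) = s0 := by
    field_simp at hs0 ⊢
    nlinarith [hs0]
  -- splitting of ‖u‖
  have hsplit : ‖u‖ = ‖u‖ ^ q0 * ‖u‖ ^ (1 - q0) := by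
    rw [← Real.rpow_add hupos]
    norm_num
  have hq0b : ‖u‖ ^ q0 ≤ b ^ q0 := Real.rpow_le_rpow (norm_nonneg u) hub hq0
  have h1q0 : ‖u‖ ^ (1 - q0) ≤ a ^ (lam1 / lam0 * (1 - q0)) := by
    rw [Real.rpow_mul ha0.le]
    exact Real.rpow_le_rpow (norm_nonneg u) hkey (by linarith)
  have hapow_pos : ∀ r : ℝ, 0 < a ^ r := fun r => Real.rpow_pos_of_pos ha0 r
  -- main computation
  have hinner : |(inner ℝ u v : ℝ)| ≤ ‖u‖ * ‖v‖ := abs_real_inner_le_norm u v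
  rw [abs_mul, abs_div, abs_of_pos (hapow_pos (2 - lam1))]
  calc |(inner ℝ u v : ℝ)| / a ^ (2 - lam1) * |ψ (‖u‖ ^ 2 / a ^ (2 * lam1 / lam0))|
      ≤ (‖u‖ * ‖v‖) / a ^ (2 - lam1) * 1 :=
        mul_le_mul ((div_le_div_iff_of_pos_right (hapow_pos _)).mpr hinner) hψle (abs_nonneg _)
          (div_nonneg (by positivity) (hapow_pos _).le)
    _ = ‖u‖ * ‖v‖ * a ^ (lam1 - 2) := by
        rw [mul_one, div_eq_mul_inv, ← Real.rpow_neg ha0.le]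
        ring_nf
    _ ≤ (b ^ q0 * a ^ (lam1 / lam0 * (1 - q0))) * (‖L1‖ * ‖L2‖ * a) * a ^ (lam1 - 2) := by
        rw [hsplit]
        gcongr <;> first | exact hq0b | exact h1q0 | exact hvle | positivity
    _ = (‖L1‖ * ‖L2‖) * b ^ q0 * (a ^ (lam1 / lam0 * (1 - q0)) * a ^ (1:ℝ) * a ^ (lam1 - 2)) := by
        rw [Real.rpow_one]; ring
    _ = (‖L1‖ * ‖L2‖) * b ^ q0 * a ^ s0 := by
        rw [← Real.rpow_add ha0, ← Real.rpow_add ha0, hexp]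
    _ ≤ (‖L1‖ * ‖L2‖ + 1) * b ^ q0 * a ^ s0 := by
        gcongr <;> first | linarith | positivity
end

section
/- Let λ_{r-1} > λ_r > 0 and χ ∈ C^∞(ℝ) with χ′ compactly supported. Let B, Q be real n×n matrices with Q symmetric positive semidefinite, and r ≥ 1. Then there exists c > 0 such that for all ξ ∈ ℝⁿ, |Bᵀξ · ∇_ξ ( χ( |Q(Bᵀ)^{r-1}ξ|² / ⟨ξ⟩^{2λ_r/λ_{r-1}} ) )| ≤ c ⟨ξ⟩^{1−λ_r/λ_{r-1}} |χ′( |Q(Bᵀ)^{r-1}ξ|² / ⟨ξ⟩^{2λ_r/λ_{r-1}} )|. -/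
lemma cutoff_aux (s t a w i1 i2 N CA CB M al : ℝ)
    (hs1 : 1 ≤ s) (ht1 : 1 ≤ t) (hts : t ≤ s)
    (hM : 0 ≤ M) (hal : 0 ≤ al) (hCA : 0 ≤ CA) (hCB : 0 ≤ CB)
    (ha0 : 0 ≤ a) (hw : 0 ≤ w)
    (hN : N = a ^ 2) (haM : a ≤ Real.sqrt M * t) (hwB : w ≤ CB * s)
    (hi1 : |i1| ≤ a * (CA * w)) (hi2 : |i2| ≤ s * w) :
    |N * (-((t * t) ^ 2)⁻¹ * ((al * (t * t / s)) * ((1 / (2 * s)) * (2 * i2))))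
      + (t * t)⁻¹ * (2 * i1)|
      ≤ (2 * Real.sqrt M * CA * CB + M * al * CB + 1) * (s / t) := by
  have hs0 : (0:ℝ) < s := lt_of_lt_of_le one_pos hs1
  have ht0 : (0:ℝ) < t := lt_of_lt_of_le one_pos ht1
  have hst1 : (1:ℝ) ≤ s / t := (one_le_div ht0).2 hts
  have hN2 : N ≤ M * (t * t) := by
    rw [hN]
    nlinarith [Real.sq_sqrt hM, Real.sqrt_nonneg M]
  have hN0 : 0 ≤ N := by rw [hN]; positivity
  have hsM : 0 ≤ Real.sqrt M := Real.sqrt_nonneg M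
  calc |N * (-((t * t) ^ 2)⁻¹ * ((al * (t * t / s)) * ((1 / (2 * s)) * (2 * i2))))
      + (t * t)⁻¹ * (2 * i1)|
      ≤ |N * (-((t * t) ^ 2)⁻¹ * ((al * (t * t / s)) * ((1 / (2 * s)) * (2 * i2))))|
        + |(t * t)⁻¹ * (2 * i1)| := abs_add_le _ _
    _ = N * (((t * t) ^ 2)⁻¹ * ((al * (t * t / s)) * ((1 / (2 * s)) * (2 * |i2|))))
        + (t * t)⁻¹ * (2 * |i1|) := by
        simp only [abs_mul, abs_neg, abs_inv, abs_pow, abs_div, abs_one, abs_two,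
          abs_of_nonneg hN0, abs_of_pos hs0, abs_of_pos ht0, abs_of_nonneg hal]
    _ ≤ (M * (t * t)) * (((t * t) ^ 2)⁻¹ * ((al * (t * t / s)) * ((1 / (2 * s)) * (2 * (s * (CB * s))))))
        + (t * t)⁻¹ * (2 * ((Real.sqrt M * t) * (CA * (CB * s)))) := by
        gcongr
        · calc |i2| ≤ s * w := hi2
            _ ≤ s * (CB * s) := by gcongr
        · calc |i1| ≤ a * (CA * w) := hi1
            _ ≤ (Real.sqrt M * t) * (CA * (CB * s)) := by gcongr
    _ = M * al * CB + 2 * Real.sqrt M * CA * CB * (s / t) := by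
        field_simp
    _ ≤ (2 * Real.sqrt M * CA * CB + M * al * CB + 1) * (s / t) := by
        have h1 : M * al * CB ≤ M * al * CB * (s / t) := le_mul_of_one_le_right (by positivity) hst1
        have h2 : 0 < s / t := by positivity
        nlinarith [mul_nonneg (mul_nonneg (mul_nonneg (by norm_num : (0:ℝ) ≤ 2) hsM) hCA) hCB]

set_option maxHeartbeats 1600000 in
/-- **Lemma on derivatives of the cut-off symbol.** Let `λ_{r-1} > λ_r > 0`, `χ` smooth
with `χ'` compactly supported, `B, Q` real `n×n` matrices with `Q` symmetric positive
semidefinite, `r ≥ 1`. Then there is `c > 0` such that for all `ξ`,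
`|Bᵀξ·∇_ξ(χ(|Q(Bᵀ)^{r-1}ξ|²/⟨ξ⟩^{2λ_r/λ_{r-1}}))|
  ≤ c ⟨ξ⟩^{1-λ_r/λ_{r-1}} |χ'(|Q(Bᵀ)^{r-1}ξ|²/⟨ξ⟩^{2λ_r/λ_{r-1}})|`. -/
theorem cutoff_derivative_bound (n : ℕ) (B Q : Matrix (Fin n) (Fin n) ℝ)
    (hQsymm : Q.IsSymm) (hQpsd : Q.PosSemidef) (r : ℕ) (hr : 1 ≤ r)
    (lamr1 lamr : ℝ) (hlamr : 0 < lamr) (hlt : lamr < lamr1)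
    (χ : ℝ → ℝ) (hχ : ContDiff ℝ (⊤ : ℕ∞) χ) (hχ' : HasCompactSupport (deriv χ)) :
    ∃ c > 0, ∀ ξ : EuclideanSpace ℝ (Fin n),
      |fderiv ℝ (fun η : EuclideanSpace ℝ (Fin n) =>
          χ (‖Matrix.toEuclideanLin (Q * B.transpose ^ (r - 1)) η‖ ^ 2 /
            Real.sqrt (1 + ‖η‖ ^ 2) ^ (2 * lamr / lamr1))) ξ
          (Matrix.toEuclideanLin B.transpose ξ)| ≤
        c * Real.sqrt (1 + ‖ξ‖ ^ 2) ^ (1 - lamr / lamr1) *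
          |deriv χ (‖Matrix.toEuclideanLin (Q * B.transpose ^ (r - 1)) ξ‖ ^ 2 /
            Real.sqrt (1 + ‖ξ‖ ^ 2) ^ (2 * lamr / lamr1))| := by
  have hlamr1 : (0:ℝ) < lamr1 := hlamr.trans hlt
  set A : EuclideanSpace ℝ (Fin n) →L[ℝ] EuclideanSpace ℝ (Fin n) :=
    LinearMap.toContinuousLinearMap (Matrix.toEuclideanLin (Q * B.transpose ^ (r - 1))) with hA
  set Bt : EuclideanSpace ℝ (Fin n) →L[ℝ] EuclideanSpace ℝ (Fin n) :=
    LinearMap.toContinuousLinearMap (Matrix.toEuclideanLin B.transpose) with hBt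
  -- bound on the support of deriv χ
  obtain ⟨M, hM⟩ := (Metric.isBounded_iff_subset_closedBall 0).mp hχ'.isBounded
  set M' := max M 0 with hM'def
  have hM'0 : (0:ℝ) ≤ M' := le_max_right _ _
  have hMb : ∀ x : ℝ, deriv χ x ≠ 0 → |x| ≤ M' := by
    intro x hx
    have hmem : x ∈ tsupport (deriv χ) := subset_tsupport _ hx
    have := hM hmem
    rw [Metric.mem_closedBall, Real.dist_eq, sub_zero] at this
    exact this.trans (le_max_left _ _)
  set al := 2 * lamr / lamr1 with hal_def
  have hal0 : 0 ≤ al := by positivity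
  refine ⟨2 * Real.sqrt M' * ‖A‖ * ‖Bt‖ + M' * al * ‖Bt‖ + 1, by positivity, fun ξ => ?_⟩
  have h1pos : (0:ℝ) < 1 + ‖ξ‖ ^ 2 := by positivity
  have hs0 : (0:ℝ) < Real.sqrt (1 + ‖ξ‖ ^ 2) := Real.sqrt_pos.2 h1pos
  have hD0 : (0:ℝ) < Real.sqrt (1 + ‖ξ‖ ^ 2) ^ al := Real.rpow_pos_of_pos hs0 _
  -- derivative of the numerator
  have hNf : HasFDerivAt
      (fun η : EuclideanSpace ℝ (Fin n) => ‖Matrix.toEuclideanLin (Q * B.transpose ^ (r - 1)) η‖ ^ 2)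
      (2 • (innerSL ℝ (A ξ)).comp A) ξ := A.hasFDerivAt.norm_sq
  -- derivative of the denominator
  have hDf : HasFDerivAt (fun η : EuclideanSpace ℝ (Fin n) => Real.sqrt (1 + ‖η‖ ^ 2) ^ al)
      ((al * Real.sqrt (1 + ‖ξ‖ ^ 2) ^ (al - 1)) •
        ((1 / (2 * Real.sqrt (1 + ‖ξ‖ ^ 2))) • (2 • innerSL ℝ ξ))) ξ := by
    have h1 : HasFDerivAt (fun η : EuclideanSpace ℝ (Fin n) => 1 + ‖η‖ ^ 2) (2 • innerSL ℝ ξ) ξ :=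
      (hasStrictFDerivAt_norm_sq ξ).hasFDerivAt.const_add 1
    exact (h1.sqrt h1pos.ne').rpow_const (Or.inl hs0.ne')
  -- derivative of the inverse of the denominator
  have hIf : HasFDerivAt (fun η : EuclideanSpace ℝ (Fin n) => (Real.sqrt (1 + ‖η‖ ^ 2) ^ al)⁻¹)
      ((-(((Real.sqrt (1 + ‖ξ‖ ^ 2) ^ al)) ^ 2)⁻¹) •
        ((al * Real.sqrt (1 + ‖ξ‖ ^ 2) ^ (al - 1)) •
          ((1 / (2 * Real.sqrt (1 + ‖ξ‖ ^ 2))) • (2 • innerSL ℝ ξ)))) ξ :=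
    (hasDerivAt_inv hD0.ne').comp_hasFDerivAt ξ hDf
  -- derivative of the quotient
  have hq : HasFDerivAt
      (fun η : EuclideanSpace ℝ (Fin n) => ‖Matrix.toEuclideanLin (Q * B.transpose ^ (r - 1)) η‖ ^ 2 /
        Real.sqrt (1 + ‖η‖ ^ 2) ^ al)
      ((‖Matrix.toEuclideanLin (Q * B.transpose ^ (r - 1)) ξ‖ ^ 2) •
        ((-(((Real.sqrt (1 + ‖ξ‖ ^ 2) ^ al)) ^ 2)⁻¹) •
          ((al * Real.sqrt (1 + ‖ξ‖ ^ 2) ^ (al - 1)) •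
            ((1 / (2 * Real.sqrt (1 + ‖ξ‖ ^ 2))) • (2 • innerSL ℝ ξ))))
        + (Real.sqrt (1 + ‖ξ‖ ^ 2) ^ al)⁻¹ • (2 • (innerSL ℝ (A ξ)).comp A)) ξ := by
    simpa only [div_eq_mul_inv, Pi.mul_def] using hNf.mul hIf
  set X := ‖Matrix.toEuclideanLin (Q * B.transpose ^ (r - 1)) ξ‖ ^ 2 /
      Real.sqrt (1 + ‖ξ‖ ^ 2) ^ al with hX
  have hχd : HasDerivAt χ (deriv χ X) X := ((hχ.differentiable (by simp)) X).hasDerivAt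
  have hfull := hχd.comp_hasFDerivAt ξ hq
  have hfd := hfull.fderiv
  rw [show (fun η : EuclideanSpace ℝ (Fin n) =>
          χ (‖Matrix.toEuclideanLin (Q * B.transpose ^ (r - 1)) η‖ ^ 2 /
            Real.sqrt (1 + ‖η‖ ^ 2) ^ (2 * lamr / lamr1)))
      = (χ ∘ fun η : EuclideanSpace ℝ (Fin n) => ‖Matrix.toEuclideanLin (Q * B.transpose ^ (r - 1)) η‖ ^ 2 /
            Real.sqrt (1 + ‖η‖ ^ 2) ^ al) from rfl, hfd]
  simp only [ContinuousLinearMap.smul_apply, ContinuousLinearMap.add_apply,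
    ContinuousLinearMap.comp_apply, innerSL_apply_apply, smul_eq_mul,
    nsmul_eq_mul, Nat.cast_ofNat]
  set s := Real.sqrt (1 + ‖ξ‖ ^ 2) with hs_def
  have hs1 : (1:ℝ) ≤ s := by
    have h := Real.sqrt_le_sqrt (show (1:ℝ) ≤ 1 + ‖ξ‖ ^ 2 by nlinarith [sq_nonneg ‖ξ‖])
    rwa [Real.sqrt_one] at h
  set t := s ^ (lamr / lamr1) with ht_def
  have ht0 : (0:ℝ) < t := Real.rpow_pos_of_pos hs0 _
  have ht1 : (1:ℝ) ≤ t := Real.one_le_rpow hs1 (div_nonneg hlamr.le hlamr1.le)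
  have hts : t ≤ s := by
    calc t = s ^ (lamr / lamr1) := ht_def
      _ ≤ s ^ (1:ℝ) := Real.rpow_le_rpow_of_exponent_le hs1 ((div_le_one hlamr1).2 hlt.le)
      _ = s := Real.rpow_one s
  have hD_t : s ^ al = t * t := by
    rw [ht_def, ← Real.rpow_add hs0, hal_def]
    congr 1
    ring
  have hsal1 : s ^ (al - 1) = t * t / s := by
    rw [Real.rpow_sub hs0, hD_t, Real.rpow_one]
  have hpow : s ^ (1 - lamr / lamr1) = s / t := by
    rw [Real.rpow_sub hs0, Real.rpow_one, ht_def]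
  rw [abs_mul, hpow]
  rcases eq_or_ne (deriv χ X) 0 with h0 | h0
  · simp only [h0, abs_zero, zero_mul, mul_zero, le_refl]
  -- support bound
  have hXb : X ≤ M' := by
    have h := hMb X h0
    have hX0 : (0:ℝ) ≤ X := by
      rw [hX]
      positivity
    rwa [abs_of_nonneg hX0] at h
  have hNle : ‖(Matrix.toEuclideanLin (Q * B.transpose ^ (r - 1))) ξ‖ ^ 2 ≤ M' * (t * t) := by
    have h := (div_le_iff₀ hD0).1 hXb
    rwa [hD_t] at h
  have haM : ‖(Matrix.toEuclideanLin (Q * B.transpose ^ (r - 1))) ξ‖ ≤ Real.sqrt M' * t := by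
    calc ‖(Matrix.toEuclideanLin (Q * B.transpose ^ (r - 1))) ξ‖
        = Real.sqrt (‖(Matrix.toEuclideanLin (Q * B.transpose ^ (r - 1))) ξ‖ ^ 2) :=
          (Real.sqrt_sq (norm_nonneg _)).symm
      _ ≤ Real.sqrt (M' * (t * t)) := Real.sqrt_le_sqrt hNle
      _ = Real.sqrt M' * t := by rw [Real.sqrt_mul hM'0, Real.sqrt_mul_self ht0.le]
  have hξs : ‖ξ‖ ≤ s := by
    rw [hs_def]
    calc ‖ξ‖ = Real.sqrt (‖ξ‖ ^ 2) := (Real.sqrt_sq (norm_nonneg ξ)).symm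
      _ ≤ Real.sqrt (1 + ‖ξ‖ ^ 2) := Real.sqrt_le_sqrt (by nlinarith [norm_nonneg ξ])
  have hBtx : Bt ξ = Matrix.toEuclideanLin B.transpose ξ := by
    rw [hBt]; simp
  have hv : ‖(Matrix.toEuclideanLin B.transpose) ξ‖ ≤ ‖Bt‖ * s := by
    rw [← hBtx]
    exact (Bt.le_opNorm ξ).trans (mul_le_mul_of_nonneg_left hξs (norm_nonneg _))
  have hAv : ‖A ((Matrix.toEuclideanLin B.transpose) ξ)‖ ≤
      ‖A‖ * ‖(Matrix.toEuclideanLin B.transpose) ξ‖ := A.le_opNorm _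
  have hi1 : |(inner ℝ (A ξ) (A ((Matrix.toEuclideanLin B.transpose) ξ)) : ℝ)| ≤
      ‖(Matrix.toEuclideanLin (Q * B.transpose ^ (r - 1))) ξ‖ *
        (‖A‖ * ‖(Matrix.toEuclideanLin B.transpose) ξ‖) := by
    refine (abs_real_inner_le_norm _ _).trans ?_
    gcongr
    exact le_refl _
  have hi2 : |(inner ℝ ξ ((Matrix.toEuclideanLin B.transpose) ξ) : ℝ)| ≤
      s * ‖(Matrix.toEuclideanLin B.transpose) ξ‖ := by
    refine (abs_real_inner_le_norm _ _).trans ?_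
    gcongr
  have key := cutoff_aux s t
    ‖(Matrix.toEuclideanLin (Q * B.transpose ^ (r - 1))) ξ‖
    ‖(Matrix.toEuclideanLin B.transpose) ξ‖
    (inner ℝ (A ξ) (A ((Matrix.toEuclideanLin B.transpose) ξ)))
    (inner ℝ ξ ((Matrix.toEuclideanLin B.transpose) ξ))
    (‖(Matrix.toEuclideanLin (Q * B.transpose ^ (r - 1))) ξ‖ ^ 2)
    ‖A‖ ‖Bt‖ M' al hs1 ht1 hts hM'0 hal0 (norm_nonneg _) (norm_nonneg _)
    (norm_nonneg _) (norm_nonneg _) rfl haM hv hi1 hi2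
  calc |deriv χ X| * |‖(Matrix.toEuclideanLin (Q * B.transpose ^ (r - 1))) ξ‖ ^ 2 *
          (-((s ^ al) ^ 2)⁻¹ *
            (al * s ^ (al - 1) *
              (1 / (2 * s) * (2 * inner ℝ ξ ((Matrix.toEuclideanLin B.transpose) ξ))))) +
          (s ^ al)⁻¹ * (2 * inner ℝ (A ξ) (A ((Matrix.toEuclideanLin B.transpose) ξ)))|
      ≤ |deriv χ X| * ((2 * Real.sqrt M' * ‖A‖ * ‖Bt‖ + M' * al * ‖Bt‖ + 1) * (s / t)) := by
        gcongr
        rw [hD_t, hsal1]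
        calc _ = _ := by ring_nf
          _ ≤ _ := key
          
    _ = (2 * Real.sqrt M' * ‖A‖ * ‖Bt‖ + M' * al * ‖Bt‖ + 1) * (s / t) * |deriv χ X| := by ring
end
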